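/- Let C be a category with all finite limits and colimits, let F : C ⥤ D be a functor with a right adjoint G : D ⥤ C whose counit is a natural isomorphism, and let η denote the unit of the adjunction. Let W = {f | F.map f is an isomorphism}. Assume condition (b): for every morphism f : A ⟶ B of C, the canonical morphism from A to the pullback of G.map (F.map f) : G(F A) ⟶ G(F B) along η_B : B ⟶ G(F B), induced by f and η_A, lies in W. Then the triple with weak equivalences W, cofibrations all morphisms of C, and fibrations W.rlp is a model structure on C. -/

import Mathlib

open CategoryTheory CategoryTheory.Limits

universe v₁ v₂ u₁ u₂

section Preliminaries

variable {C : Type u₁} [Category.{v₁} C]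

/-- The right lifting class of a class of morphisms. -/
def MorphismPropertyRLP (S : MorphismProperty C) : MorphismProperty C :=
  fun _ _ g => ∀ ⦃A B : C⦄ (f : A ⟶ B), S f → HasLiftingProperty f g

/-- The left lifting class of a class of morphisms. -/
def MorphismPropertyLLP (S : MorphismProperty C) : MorphismProperty C :=
  fun _ _ f => ∀ ⦃X Y : C⦄ (g : X ⟶ Y), S g → HasLiftingProperty f g

/-- `(L, R)` is a weak factorization system. -/
structure IsWFS (L R : MorphismProperty C) : Prop where
  llp_eq : L = MorphismPropertyLLP R
  rlp_eq : R = MorphismPropertyRLP L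
  factor : ∀ ⦃X Y : C⦄ (f : X ⟶ Y),
    ∃ (Z : C) (l : X ⟶ Z) (r : Z ⟶ Y), L l ∧ R r ∧ l ≫ r = f

/-- The two-out-of-three property for a class of morphisms. -/
def TwoOfThree (W : MorphismProperty C) : Prop :=
  ∀ ⦃X Y Z : C⦄ (f : X ⟶ Y) (g : Y ⟶ Z),
    (W f → W g → W (f ≫ g)) ∧ (W f → W (f ≫ g) → W g) ∧ (W g → W (f ≫ g) → W f)

/-- `(W, Cof, Fib)` is a model structure. -/
structure IsModelStructure (W Cof Fib : MorphismProperty C) : Prop where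
  twoOfThree : TwoOfThree W
  wfs₁ : IsWFS Cof (fun _ _ f => Fib f ∧ W f)
  wfs₂ : IsWFS (fun _ _ f => Cof f ∧ W f) Fib

end Preliminaries

/-!
Under the adjunction, a lifting problem of `i` against `G.map p` is a lifting problem of
`F.map i` against `p`, so every `G.map p` has the right lifting property with respect to the
morphisms inverted by `F`, and so does its base change `B ×_{GFB} GFA ⟶ B` along `η_B`.
Condition (b) therefore factors every morphism as a weak equivalence followed by a fibration,
and the retract argument makes `(W, W.rlp)` a weak factorization system. A morphism in
`W ∩ W.rlp` lifts against itself and so is an isomorphism, and `(all, isomorphisms)` is a weak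
factorization system in any category.
-/

namespace CategoryTheory.MorphismProperty

variable {C : Type u₁} [Category.{v₁} C]

lemma morphismPropertyRLP_eq_rlp (S : MorphismProperty C) : MorphismPropertyRLP S = S.rlp := rfl

lemma twoOfThree_of_hasTwoOutOfThreeProperty (W : MorphismProperty C)
    [W.HasTwoOutOfThreeProperty] : TwoOfThree W :=
  fun _ _ _ f g => ⟨W.comp_mem f g, W.of_precomp f g, W.of_postcomp f g⟩

lemma isWFS_of_isWeakFactorizationSystem (L R : MorphismProperty C)
    [IsWeakFactorizationSystem L R] : IsWFS L R where
  llp_eq := (llp_eq_of_wfs L R).symm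
  rlp_eq := (rlp_eq_of_wfs L R).symm
  factor _ _ f :=
    let h := factorizationData L R f
    ⟨h.Z, h.i, h.p, h.hi, h.hp, h.fac⟩

lemma isIso_of_hasLiftingProperty_self {X Y : C} (g : X ⟶ Y) [HasLiftingProperty g g] :
    IsIso g :=
  have sq : CommSq (𝟙 X) g g (𝟙 Y) := ⟨by simp⟩
  ⟨sq.lift, sq.fac_left, sq.fac_right⟩

lemma rlp_inf_eq_isomorphisms {W : MorphismProperty C} (hW : isomorphisms C ≤ W) :
    W.rlp ⊓ W = isomorphisms C := by
  ext X Y g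
  constructor
  · rintro ⟨hrlp, hg⟩
    have := hrlp g hg
    exact isIso_of_hasLiftingProperty_self g
  · intro (_ : IsIso g)
    exact ⟨rlp_of_isIso W g, hW g inferInstance⟩

instance : (⊤ : MorphismProperty C).IsStableUnderRetracts := ⟨fun _ _ => trivial⟩

instance : HasFactorization (⊤ : MorphismProperty C) (isomorphisms C) where
  nonempty_mapFactorizationData f :=
    ⟨{ Z := _, i := f, p := 𝟙 _, hi := trivial, hp := isomorphisms.infer_property _ }⟩

instance : IsWeakFactorizationSystem (⊤ : MorphismProperty C) (isomorphisms C) :=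
  .mk' _ _ fun _ p _ (_ : IsIso p) => inferInstance

instance (W : MorphismProperty C) [W.IsStableUnderRetracts] [HasFactorization W W.rlp] :
    IsWeakFactorizationSystem W W.rlp :=
  .mk' _ _ fun _ _ hi hp => hp _ hi

lemma isModelStructure_top_rlp (W : MorphismProperty C) [W.HasTwoOutOfThreeProperty]
    [W.IsStableUnderRetracts] [HasFactorization W W.rlp] (hW : isomorphisms C ≤ W) :
    IsModelStructure W ⊤ (MorphismPropertyRLP W) := by
  refine ⟨twoOfThree_of_hasTwoOutOfThreeProperty W, ?_, ?_⟩
  · have hFibW : (fun _ _ f => MorphismPropertyRLP W f ∧ W f) = isomorphisms C :=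
      rlp_inf_eq_isomorphisms hW
    rw [hFibW]
    exact isWFS_of_isWeakFactorizationSystem ⊤ _
  · have hCofW : (fun _ _ f => (⊤ : MorphismProperty C) f ∧ W f : MorphismProperty C) = W := by
      ext; exact and_iff_right trivial
    rw [hCofW, morphismPropertyRLP_eq_rlp]
    exact isWFS_of_isWeakFactorizationSystem W _

end CategoryTheory.MorphismProperty

namespace CategoryTheory.Adjunction

open MorphismProperty

variable {C : Type u₁} [Category.{v₁} C] {D : Type u₂} [Category.{v₂} D]
  {F : C ⥤ D} {G : D ⥤ C}

lemma map_mem_rlp_inverseImage_isomorphisms (adj : F ⊣ G) {X Y : D} (p : X ⟶ Y) :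
    ((isomorphisms D).inverseImage F).rlp (G.map p) :=
  fun _ _ i (_ : IsIso (F.map i)) => (adj.hasLiftingProperty_iff i p).1 inferInstance

lemma hasFactorization_inverseImage_isomorphisms_rlp [HasPullbacks C] (adj : F ⊣ G)
    (hb : ∀ ⦃A B : C⦄ (f : A ⟶ B), IsIso (F.map (pullback.lift f (adj.unit.app A)
      (by simp : f ≫ adj.unit.app B = adj.unit.app A ≫ G.map (F.map f))))) :
    HasFactorization ((isomorphisms D).inverseImage F) ((isomorphisms D).inverseImage F).rlp where
  nonempty_mapFactorizationData {_ Y} f := by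
    refine ⟨⟨_, _, pullback.fst (adj.unit.app Y) (G.map (F.map f)), pullback.lift_fst _ _ _,
      hb f, ?_⟩⟩
    intro _ _ i hi
    have := adj.map_mem_rlp_inverseImage_isomorphisms (F.map f) i hi
    infer_instance

end CategoryTheory.Adjunction

open MorphismProperty in
/-- Given an adjunction `F ⊣ G` with invertible counit, if for every `f : A ⟶ B` the
canonical map `A ⟶ B ×_{GFB} GFA` is inverted by `F`, then `C` carries a model
structure whose weak equivalences are the morphisms inverted by `F`, whose
cofibrations are all morphisms, and whose fibrations are the right lifting class of
the weak equivalences. -/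
theorem modelStructure_of_adjoint_section
    {C : Type u₁} [Category.{v₁} C] {D : Type u₂} [Category.{v₂} D]
    [HasFiniteLimits C]
    (F : C ⥤ D) (G : D ⥤ C) (adj : F ⊣ G)
    (W : MorphismProperty C) (hW : W = fun _ _ f => IsIso (F.map f))
    (hb : ∀ ⦃A B : C⦄ (f : A ⟶ B),
      W (pullback.lift f (adj.unit.app A)
          (by simp :
            f ≫ adj.unit.app B = adj.unit.app A ≫ G.map (F.map f)))) :
    IsModelStructure W (fun _ _ _ => True) (MorphismPropertyRLP W) := by
  obtain rfl : W = (isomorphisms D).inverseImage F := hW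
  have := adj.hasFactorization_inverseImage_isomorphisms_rlp hb
  exact isModelStructure_top_rlp _ fun _ _ f (_ : IsIso f) => isomorphisms.infer_property (F.map f)
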